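/- arXiv:2111.03564 — 3 statements merged into one kernel-verified Lean document; each statement's English description precedes it below -/
import Mathlib

section
/- (Theorem 2, SL-DRS invariance) Let W ⊆ ℝⁿ, A ∈ ℝⁿˣⁿ, B ∈ ℝⁿˣᵐ, and matrices Φ_e⁰ = I, Φ_e¹, ..., Φ_eᴺ = 0 in ℝⁿˣⁿ and Φ_k⁰, ..., Φ_kᴺ = 0 in ℝᵐˣⁿ satisfying Φ_e^{j+1} = A Φ_e^j + B Φ_k^j for all 0 ≤ j ≤ N−1. For any disturbances w_0, ..., w_N ∈ W, if e = Σ_{j=0}^{N−1} Φ_e^j w_{N−1−j} and u = Σ_{j=0}^{N−1} Φ_k^j w_{N−1−j}, then A e + B u + w_N = Σ_{j=0}^{N−1} Φ_e^j w_{N−j}. Consequently, the set F_{e,N} = ⊕_{j=0}^{N−1} Φ_e^j W is invariant: if e ∈ F_{e,N} has the above convolutional form with weights in W and the control law π(w) = Σ_{j=0}^{N−1} Φ_k^j w_{N−1−j} is applied, then A e + B π + w ∈ F_{e,N} for every w ∈ W. -/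
open Matrix BigOperators Finset

/-- The system level disturbance reachable set `F_i = Φ⁰W ⊕ ... ⊕ Φ^{i-1}W`. -/
def SLDRS {n : ℕ} (W : Set (Fin n → ℝ)) (Φ : ℕ → Matrix (Fin n) (Fin n) ℝ) (i : ℕ) :
    Set (Fin n → ℝ) :=
  {x | ∃ w : Fin i → (Fin n → ℝ), (∀ j, w j ∈ W) ∧ x = ∑ j : Fin i, Φ (j : ℕ) *ᵥ w j}

/-!
One step of the error dynamics shifts the convolution by one lag: the recursion
`Φe (j+1) = A Φe j + B Φk j` turns `A e + B u` into `∑_{j<N} Φe (j+1) w_{N-1-j}`,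
the new disturbance `w_N` enters with weight `Φe 0 = 1`, and the FIR condition
`Φe N = 0` drops the oldest disturbance `w_0`. The result is again a sum
`∑_{j<N} Φe j w'_j` with weights `w'_j = w_{N-j} ∈ W`, i.e. a point of `F_{e,N}`.
-/

section SystemResponse

variable {R ι κ : Type*} [CommRing R] [Fintype ι] [Fintype κ]

theorem mulVec_sum_add_mulVec_sum_eq_of_slp {N : ℕ} (A : Matrix ι ι R) (B : Matrix ι κ R)
    (Φe : ℕ → Matrix ι ι R) (Φk : ℕ → Matrix κ ι R)
    (hrec : ∀ j < N, Φe (j + 1) = A * Φe j + B * Φk j) (v : ℕ → ι → R) :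
    A *ᵥ (∑ j ∈ range N, Φe j *ᵥ v (N - 1 - j)) + B *ᵥ (∑ j ∈ range N, Φk j *ᵥ v (N - 1 - j))
      = ∑ j ∈ range N, Φe (j + 1) *ᵥ v (N - (j + 1)) := by
  rw [mulVec_sum, mulVec_sum, ← sum_add_distrib]
  refine sum_congr rfl fun j hj => ?_
  rw [hrec j (mem_range.mp hj), add_mulVec, mulVec_mulVec, mulVec_mulVec, Nat.sub_right_comm,
    Nat.sub_sub]

theorem sum_mulVec_succ_add_eq_of_fir [DecidableEq ι] {N : ℕ} (Φ : ℕ → Matrix ι ι R)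
    (hΦ0 : Φ 0 = 1) (hΦN : Φ N = 0) (v : ℕ → ι → R) :
    ∑ j ∈ range N, Φ (j + 1) *ᵥ v (N - (j + 1)) + v N = ∑ j ∈ range N, Φ j *ᵥ v (N - j) := by
  have hshift := sum_range_succ' (fun j => Φ j *ᵥ v (N - j)) N
  rw [sum_range_succ, hΦN, zero_mulVec, add_zero, hΦ0, one_mulVec, Nat.sub_zero] at hshift
  exact hshift.symm

end SystemResponse

theorem sum_range_mulVec_mem_SLDRS {n N : ℕ} {W : Set (Fin n → ℝ)}
    (Φ : ℕ → Matrix (Fin n) (Fin n) ℝ) {v : ℕ → Fin n → ℝ} (hv : ∀ j < N, v j ∈ W) :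
    ∑ j ∈ range N, Φ j *ᵥ v j ∈ SLDRS W Φ N :=
  ⟨fun j => v j, fun j => hv j j.isLt, (Fin.sum_univ_eq_sum_range (fun j => Φ j *ᵥ v j) N).symm⟩

theorem sldrs_invariance_general {n m N : ℕ}
    (W : Set (Fin n → ℝ))
    (A : Matrix (Fin n) (Fin n) ℝ) (B : Matrix (Fin n) (Fin m) ℝ)
    (Φe : ℕ → Matrix (Fin n) (Fin n) ℝ) (Φk : ℕ → Matrix (Fin m) (Fin n) ℝ)
    (hΦe0 : Φe 0 = 1) (hΦeN : Φe N = 0)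
    (hrec : ∀ j < N, Φe (j + 1) = A * Φe j + B * Φk j)
    (w : ℕ → (Fin n → ℝ)) (hw : ∀ i ≤ N, w i ∈ W)
    (e : Fin n → ℝ) (u : Fin m → ℝ)
    (he : e = ∑ j ∈ Finset.range N, Φe j *ᵥ w (N - 1 - j))
    (hu : u = ∑ j ∈ Finset.range N, Φk j *ᵥ w (N - 1 - j)) :
    (A *ᵥ e + B *ᵥ u + w N = ∑ j ∈ Finset.range N, Φe j *ᵥ w (N - j)) ∧
      A *ᵥ e + B *ᵥ u + w N ∈ SLDRS W Φe N := by
  have hstep : A *ᵥ e + B *ᵥ u + w N = ∑ j ∈ range N, Φe j *ᵥ w (N - j) := by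
    rw [he, hu, mulVec_sum_add_mulVec_sum_eq_of_slp A B Φe Φk hrec w,
      sum_mulVec_succ_add_eq_of_fir Φe hΦe0 hΦeN w]
  refine ⟨hstep, hstep ▸ ?_⟩
  exact sum_range_mulVec_mem_SLDRS Φe fun j _ => hw (N - j) (Nat.sub_le N j)

/-- Theorem 2, SL-DRS invariance: under the FIR-constrained affine SLP
recursion, one step of the closed-loop error dynamics shifts the convolution, and
hence `F_{e,N}` is invariant under the control law `π(w) = ∑ Φ_k^j w_{N-1-j}`. -/
theorem sldrs_invariance {n m N : ℕ}
    (W : Set (Fin n → ℝ))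
    (A : Matrix (Fin n) (Fin n) ℝ) (B : Matrix (Fin n) (Fin m) ℝ)
    (Φe : ℕ → Matrix (Fin n) (Fin n) ℝ) (Φk : ℕ → Matrix (Fin m) (Fin n) ℝ)
    (hΦe0 : Φe 0 = 1) (hΦeN : Φe N = 0) (hΦkN : Φk N = 0)
    (hrec : ∀ j < N, Φe (j + 1) = A * Φe j + B * Φk j)
    (w : ℕ → (Fin n → ℝ)) (hw : ∀ i ≤ N, w i ∈ W)
    (e : Fin n → ℝ) (u : Fin m → ℝ)
    (he : e = ∑ j ∈ Finset.range N, Φe j *ᵥ w (N - 1 - j))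
    (hu : u = ∑ j ∈ Finset.range N, Φk j *ᵥ w (N - 1 - j)) :
    (A *ᵥ e + B *ᵥ u + w N = ∑ j ∈ Finset.range N, Φe j *ᵥ w (N - j)) ∧
      A *ᵥ e + B *ᵥ u + w N ∈ SLDRS W Φe N :=
  sldrs_invariance_general W A B Φe Φk hΦe0 hΦeN hrec w hw e u he hu
end

section
/- (Affine SLP, direction 1) Let 𝒵𝒜 and 𝒵ℬ be strictly block-lower-triangular (nilpotent) matrices and K any block-lower-triangular matrix of compatible dimensions. Define Φ_x = (I − 𝒵𝒜 − 𝒵ℬK)⁻¹ and Φ_u = K(I − 𝒵𝒜 − 𝒵ℬK)⁻¹. Then (I − 𝒵𝒜 − 𝒵ℬK) is invertible, and Φ_x, Φ_u satisfy the affine subspace constraint (I − 𝒵𝒜)Φ_x − 𝒵ℬΦ_u = I. -/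
/-! `𝒵𝒜 + 𝒵ℬK` is strictly block-lower-triangular, because a strictly lower factor times a
lower one is strictly lower. Each power of it pushes the nonzero entries one more block below
the diagonal, so it is nilpotent and `I - 𝒵𝒜 - 𝒵ℬK` is a unit. The affine constraint is just
`(I - 𝒵𝒜 - 𝒵ℬK) Φ_x = I` regrouped. -/

open Matrix

namespace Matrix

variable {m n o R α : Type*}

/- The gradings `a` and `b` give the block (time) index of each row and column; unlike
`Matrix.BlockTriangular`, this allows rectangular matrices with different row and column blocks. -/
def StrictBlockLower [Zero R] [Preorder α] (a : m → α) (b : n → α) (A : Matrix m n R) : Prop :=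
  ∀ i j, a i ≤ b j → A i j = 0

def BlockLower [Zero R] [Preorder α] (a : m → α) (b : n → α) (A : Matrix m n R) : Prop :=
  ∀ i j, a i < b j → A i j = 0

lemma StrictBlockLower.add [AddZeroClass R] [Preorder α] {a : m → α} {b : n → α}
    {A B : Matrix m n R} (hA : StrictBlockLower a b A) (hB : StrictBlockLower a b B) :
    StrictBlockLower a b (A + B) := fun i j hij => by
  rw [add_apply, hA i j hij, hB i j hij, add_zero]

lemma StrictBlockLower.mul_blockLower [Fintype n] [NonUnitalNonAssocSemiring R] [LinearOrder α]
    {a : m → α} {b : n → α} {c : o → α} {A : Matrix m n R} {B : Matrix n o R}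
    (hA : StrictBlockLower a b A) (hB : BlockLower b c B) : StrictBlockLower a c (A * B) := by
  intro i j hij
  rw [mul_apply]
  refine Finset.sum_eq_zero fun k _ => ?_
  rcases le_or_gt (a i) (b k) with hik | hki
  · rw [hA i k hik, zero_mul]
  · rw [hB k j (hki.trans_le hij), mul_zero]

lemma blockLower_one [DecidableEq m] [Zero R] [One R] [Preorder α] (a : m → α) :
    BlockLower a a (1 : Matrix m m R) :=
  fun _ _ hij => one_apply_ne (ne_of_apply_ne a hij.ne)

lemma StrictBlockLower.pow_blockLower [Fintype m] [DecidableEq m] [Semiring R] {g : m → ℕ}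
    {N : Matrix m m R} (hN : StrictBlockLower g g N) (k : ℕ) :
    BlockLower g (fun j => g j + k) (N ^ k) := by
  induction k with
  | zero => exact blockLower_one g
  | succ k ih =>
    intro i j hij
    rw [pow_succ']
    exact hN.mul_blockLower ih i j (Nat.le_of_lt_succ hij)

lemma StrictBlockLower.isNilpotent [Fintype m] [DecidableEq m] [Semiring R] {g : m → ℕ}
    {N : Matrix m m R} (hN : StrictBlockLower g g N) : IsNilpotent N := by
  refine ⟨Finset.univ.sup g + 1, ext fun i j => hN.pow_blockLower _ i j ?_⟩
  have := Finset.le_sup (f := g) (Finset.mem_univ i)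
  dsimp only
  omega

end Matrix

/-- Affine SLP, direction 1: for strictly block-lower-triangular `𝒵𝒜`, `𝒵ℬ`
(w.r.t. block gradings `bx`, `bu`) and block-lower-triangular `K`, the matrix
`I - 𝒵𝒜 - 𝒵ℬK` is invertible and the resulting system responses
`Φ_x = (I - 𝒵𝒜 - 𝒵ℬK)⁻¹`, `Φ_u = K Φ_x` satisfy `(I - 𝒵𝒜)Φ_x - 𝒵ℬ Φ_u = I`. -/
theorem affine_slp_direction1 {p q : ℕ}
    (bx : Fin p → ℕ) (bu : Fin q → ℕ)
    (ZA : Matrix (Fin p) (Fin p) ℝ) (ZB : Matrix (Fin p) (Fin q) ℝ)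
    (K : Matrix (Fin q) (Fin p) ℝ)
    (hZA : ∀ i j, bx i ≤ bx j → ZA i j = 0)
    (hZB : ∀ i j, bx i ≤ bu j → ZB i j = 0)
    (hK : ∀ i j, bu i < bx j → K i j = 0) :
    IsUnit (1 - ZA - ZB * K) ∧
      (1 - ZA) * (1 - ZA - ZB * K)⁻¹ - ZB * (K * (1 - ZA - ZB * K)⁻¹) = 1 := by
  have hN : StrictBlockLower bx bx (ZA + ZB * K) :=
    StrictBlockLower.add hZA (StrictBlockLower.mul_blockLower hZB hK)
  have hunit : IsUnit (1 - ZA - ZB * K) := by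
    simpa only [sub_sub] using hN.isNilpotent.isUnit_one_sub
  refine ⟨hunit, ?_⟩
  calc (1 - ZA) * (1 - ZA - ZB * K)⁻¹ - ZB * (K * (1 - ZA - ZB * K)⁻¹)
      = (1 - ZA - ZB * K) * (1 - ZA - ZB * K)⁻¹ := by rw [sub_mul (1 - ZA), Matrix.mul_assoc]
    _ = 1 := mul_nonsing_inv _ ((isUnit_iff_isUnit_det _).1 hunit)
end

section
/- (Affine SLP, direction 2) Let Φ_x be invertible and Φ_u be matrices satisfying (I − 𝒵𝒜)Φ_x − 𝒵ℬΦ_u = I. Define K = Φ_u Φ_x⁻¹. Then the closed-loop map of the system x̃ = (𝒵𝒜 + 𝒵ℬK)x̃ + δ̃ equals Φ_x, i.e., (I − 𝒵𝒜 − 𝒵ℬK)⁻¹ = Φ_x, and K(I − 𝒵𝒜 − 𝒵ℬK)⁻¹ = Φ_u. -/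
open Matrix

namespace Matrix

variable {n m α : Type*} [Fintype n] [DecidableEq n] [Fintype m] [CommRing α]

theorem nonsing_inv_mul_of_isUnit {X : Matrix n n α} (hX : IsUnit X) : X⁻¹ * X = 1 :=
  nonsing_inv_mul X ((isUnit_iff_isUnit_det X).mp hX)

theorem sub_sub_mul_mul_nonsing_inv_mul {A X : Matrix n n α} {B : Matrix n m α}
    {U : Matrix m n α} (hX : IsUnit X) :
    (1 - A - B * (U * X⁻¹)) * X = (1 - A) * X - B * U := by
  rw [Matrix.sub_mul, Matrix.mul_assoc, Matrix.mul_assoc, nonsing_inv_mul_of_isUnit hX,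
    Matrix.mul_one]

end Matrix

/-- Affine SLP, direction 2: if invertible `Φ_x` and `Φ_u` satisfy the
affine subspace constraint `(I - 𝒵𝒜)Φ_x - 𝒵ℬΦ_u = I`, then the controller
`K = Φ_u Φ_x⁻¹` achieves the system responses: `(I - 𝒵𝒜 - 𝒵ℬK)⁻¹ = Φ_x` and
`K (I - 𝒵𝒜 - 𝒵ℬK)⁻¹ = Φ_u`. -/
theorem affine_slp_direction2 {p q : ℕ}
    (ZA : Matrix (Fin p) (Fin p) ℝ) (ZB : Matrix (Fin p) (Fin q) ℝ)
    (Φx : Matrix (Fin p) (Fin p) ℝ) (Φu : Matrix (Fin q) (Fin p) ℝ)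
    (hΦx : IsUnit Φx)
    (hconstraint : (1 - ZA) * Φx - ZB * Φu = 1) :
    (1 - ZA - ZB * (Φu * Φx⁻¹))⁻¹ = Φx ∧
      (Φu * Φx⁻¹) * (1 - ZA - ZB * (Φu * Φx⁻¹))⁻¹ = Φu := by
  have hΦx_closedLoop : (1 - ZA - ZB * (Φu * Φx⁻¹))⁻¹ = Φx :=
    inv_eq_right_inv ((sub_sub_mul_mul_nonsing_inv_mul hΦx).trans hconstraint)
  refine ⟨hΦx_closedLoop, ?_⟩
  rw [hΦx_closedLoop, Matrix.mul_assoc, nonsing_inv_mul_of_isUnit hΦx, Matrix.mul_one]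
end
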